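/- arXiv:1905.13228 — 2 statements merged into one kernel-verified Lean document; each statement's English description precedes it below -/
import Mathlib

section
/- Let G be a finite simple graph and let {X_1, …, X_ℓ, Y} be a Godsil–McKay switching partition of its vertex set. Let G' be the switched graph obtained from G and this partition. Then G and G' are cospectral, i.e., the adjacency matrices of G and G' (over ℝ) have equal characteristic polynomials. -/
/-! Let `Q` be the symmetric matrix that is `(2/|X_i|) J - I` on each block `X_i × X_i`, the
identity on `Y × Y`, and zero elsewhere. Each `(2/|X_i|) J - I` is an involution, so `Q² = 1`, and
`Q A Q` is the adjacency matrix of the switched graph. On an `X_i × Y` block, `(2/|X_i|) J - I`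
fixes a column with `0` or `|X_i|` ones and complements a column with `|X_i|/2` ones. On an
`X_i × X_j` block `B` the row sums `d_ij` and column sums `d_ji` are constant, and
`|X_i| d_ij = |X_j| d_ji` by double counting, so `(2/|X_i|) J B = B (2/|X_j|) J` and the `J`-terms
cancel. Hence `A' = Q A Q⁻¹` has the characteristic polynomial of `A`. -/

open Finset SimpleGraph Polynomial

open scoped Classical in
/-- Number of neighbors of `v` inside the finset `S`, in the graph `G`. -/
noncomputable def nbrsIn {V : Type*} (G : SimpleGraph V) (v : V) (S : Finset V) : ℕ :=
  (S.filter (fun w => G.Adj v w)).card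

/-- The `i`-th part `X_i` of a partition of the vertex set encoded by `f`
(`f v = some i` means `v ∈ X_i`, and `f v = none` means `v ∈ Y`). -/
def Xset {V : Type*} [Fintype V] {ℓ : ℕ} (f : V → Option (Fin ℓ)) (i : Fin ℓ) : Finset V :=
  Finset.univ.filter (fun v => f v = some i)

/-- The part `Y` of the partition of the vertex set encoded by `f`. -/
def Yset {V : Type*} [Fintype V] {ℓ : ℕ} (f : V → Option (Fin ℓ)) : Finset V :=
  Finset.univ.filter (fun v => f v = none)

/-- The partition `{X_1, …, X_ℓ, Y}` (encoded by `f`) is a Godsil–McKay switching partition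
of `G`: every `y ∈ Y` has `0`, `|X_i|/2` or `|X_i|` neighbors in each `X_i`, and for all `i, j`,
all vertices of `X_i` have the same number of neighbors in `X_j`. -/
def IsGMPartition {V : Type*} [Fintype V] (G : SimpleGraph V) {ℓ : ℕ}
    (f : V → Option (Fin ℓ)) : Prop :=
  (∀ y ∈ Yset f, ∀ i : Fin ℓ,
      nbrsIn G y (Xset f i) = 0 ∨ 2 * nbrsIn G y (Xset f i) = (Xset f i).card ∨
        nbrsIn G y (Xset f i) = (Xset f i).card) ∧
  (∀ i j : Fin ℓ, ∀ u ∈ Xset f i, ∀ v ∈ Xset f i,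
      nbrsIn G u (Xset f j) = nbrsIn G v (Xset f j))

/-- The pairs of vertices whose adjacency is flipped by the Godsil–McKay switching:
one of them lies in `Y`, the other in some `X_i`, and the former has exactly `|X_i|/2`
neighbors in `X_i`. -/
def gmFlip {V : Type*} [Fintype V] (G : SimpleGraph V) {ℓ : ℕ} (f : V → Option (Fin ℓ))
    (u v : V) : Prop :=
  (∃ i : Fin ℓ, f u = none ∧ f v = some i ∧ 2 * nbrsIn G u (Xset f i) = (Xset f i).card) ∨
  (∃ i : Fin ℓ, f v = none ∧ f u = some i ∧ 2 * nbrsIn G v (Xset f i) = (Xset f i).card)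

/-- The Godsil–McKay switched graph `G'`: adjacency within `X_1 ∪ … ∪ X_ℓ`, or within `Y`,
is as in `G`; adjacency between `y ∈ Y` and `x ∈ X_i` is complemented exactly when `y` has
`|X_i|/2` neighbors in `X_i` in `G`. -/
def gmSwitch {V : Type*} [Fintype V] (G : SimpleGraph V) {ℓ : ℕ} (f : V → Option (Fin ℓ)) :
    SimpleGraph V where
  Adj u v := (gmFlip G f u v ∧ ¬ G.Adj u v ∧ u ≠ v) ∨ (¬ gmFlip G f u v ∧ G.Adj u v)
  symm := by
    refine ⟨?_⟩
    intro u v h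
    have hsymm : gmFlip G f u v ↔ gmFlip G f v u := ⟨Or.symm, Or.symm⟩
    rcases h with ⟨h1, h2, h3⟩ | ⟨h1, h2⟩
    · exact Or.inl ⟨hsymm.mp h1, fun h => h2 (G.adj_symm h), h3.symm⟩
    · exact Or.inr ⟨fun h => h1 (hsymm.mpr h), G.adj_symm h2⟩
  loopless := by
    refine ⟨?_⟩
    intro u h
    rcases h with ⟨_, _, h3⟩ | ⟨_, h2⟩
    · exact h3 rfl
    · exact G.loopless.irrefl u h2

open scoped Classical in
/-- The adjacency matrix of `G`, over `ℝ`. -/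
noncomputable def adjMat {V : Type*} (G : SimpleGraph V) : Matrix V V ℝ :=
  Matrix.of fun u v => if G.Adj u v then 1 else 0

namespace GodsilMcKay

open scoped Classical Matrix

variable {V : Type*} {ℓ : ℕ}

section AdjMat

variable (G : SimpleGraph V) (u v : V)

theorem adjMat_apply : adjMat G u v = if G.Adj u v then 1 else 0 := rfl

theorem adjMat_comm : adjMat G u v = adjMat G v u := by
  simp only [adjMat_apply, G.adj_comm]

theorem adjMat_transpose : (adjMat G)ᵀ = adjMat G :=
  Matrix.ext fun u v => adjMat_comm G v u

theorem sum_adjMat_eq_nbrsIn (S : Finset V) : ∑ w ∈ S, adjMat G v w = nbrsIn G v S := by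
  simp only [adjMat_apply, Finset.sum_boole, nbrsIn]

variable {G u v}

theorem nbrsIn_eq_card_mul_adjMat {S : Finset V}
    (h : nbrsIn G v S = 0 ∨ nbrsIn G v S = #S) (hu : u ∈ S) :
    (nbrsIn G v S : ℝ) = #S * adjMat G v u := by
  rcases h with h | h
  · have hnot : ¬ G.Adj v u := Finset.filter_eq_empty_iff.mp (Finset.card_eq_zero.mp h) hu
    simp [h, adjMat_apply, hnot]
  · have hall := Finset.eq_of_subset_of_card_le (Finset.filter_subset (G.Adj v ·) S) h.ge
    have hvu : G.Adj v u := (Finset.mem_filter.mp (hall ▸ hu)).2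
    simp [h, adjMat_apply, hvu]

end AdjMat

section Partition

variable [Fintype V] {f : V → Option (Fin ℓ)} {G : SimpleGraph V} {u v : V} {i j : Fin ℓ}

theorem mem_Xset : u ∈ Xset f i ↔ f u = some i := by simp [Xset]

theorem mem_Yset : u ∈ Yset f ↔ f u = none := by simp [Yset]

theorem card_Xset_ne_zero (hu : f u = some i) : (#(Xset f i) : ℝ) ≠ 0 := by
  exact_mod_cast (Finset.card_pos.mpr ⟨u, mem_Xset.mpr hu⟩).ne'

theorem card_mul_nbrsIn_eq (hf : IsGMPartition G f) (hu : u ∈ Xset f i) (hv : v ∈ Xset f j) :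
    #(Xset f i) * nbrsIn G u (Xset f j) = #(Xset f j) * nbrsIn G v (Xset f i) :=
  Finset.card_mul_eq_card_mul G.Adj (fun w hw => hf.2 i j w hw u hu)
    fun z hz => by
      rw [← hf.2 j i z hz v hv, nbrsIn]
      simp only [Finset.bipartiteBelow, G.adj_comm]

theorem not_gmFlip_of_isNone_eq (h : (f u).isNone = (f v).isNone) : ¬ gmFlip G f u v := by
  rintro (⟨k, hu, hv, -⟩ | ⟨k, hv, hu, -⟩) <;> simp [hu, hv] at h

theorem gmFlip_iff (hu : f u = some i) (hv : f v = none) :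
    gmFlip G f u v ↔ 2 * nbrsIn G v (Xset f i) = #(Xset f i) := by
  simp [gmFlip, hu, hv]

theorem adjMat_gmSwitch_of_not_gmFlip (h : ¬ gmFlip G f u v) :
    adjMat (gmSwitch G f) u v = adjMat G u v := by
  simp [adjMat_apply, gmSwitch, h]

theorem adjMat_gmSwitch_of_gmFlip (h : gmFlip G f u v) :
    adjMat (gmSwitch G f) u v = 1 - adjMat G u v := by
  have hne : u ≠ v := by
    rintro rfl
    exact not_gmFlip_of_isNone_eq rfl h
  by_cases hadj : G.Adj u v <;> simp [adjMat_apply, gmSwitch, h, hadj, hne]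

end Partition

section SwitchingMatrix

variable [Fintype V] [DecidableEq V] (f : V → Option (Fin ℓ))

noncomputable def gmMatrix : Matrix V V ℝ :=
  Matrix.of fun u v =>
    match f u with
    | none => (1 : Matrix V V ℝ) u v
    | some i => (if f v = some i then 2 / (#(Xset f i) : ℝ) else 0) - (1 : Matrix V V ℝ) u v

variable {f} {G : SimpleGraph V} {u v : V} {i j : Fin ℓ}

theorem gmMatrix_apply_of_none (hu : f u = none) : gmMatrix f u v = (1 : Matrix V V ℝ) u v := by
  simp [gmMatrix, hu]

theorem gmMatrix_apply_of_some (hu : f u = some i) :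
    gmMatrix f u v =
      (if f v = some i then 2 / (#(Xset f i) : ℝ) else 0) - (1 : Matrix V V ℝ) u v := by
  simp [gmMatrix, hu]

theorem gmMatrix_transpose : (gmMatrix f)ᵀ = gmMatrix f := by
  ext u v
  rcases hu : f u with _ | i <;> rcases hv : f v with _ | j <;>
    by_cases huv : u = v <;> simp_all [gmMatrix, Matrix.one_apply, eq_comm]

theorem gmMatrix_mul_apply_of_none (M : Matrix V V ℝ) (hu : f u = none) :
    (gmMatrix f * M) u v = M u v := by
  simp [Matrix.mul_apply, gmMatrix_apply_of_none hu, Matrix.one_apply]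

theorem gmMatrix_mul_apply_of_some (M : Matrix V V ℝ) (hu : f u = some i) :
    (gmMatrix f * M) u v = 2 / #(Xset f i) * ∑ w ∈ Xset f i, M w v - M u v := by
  simp [Matrix.mul_apply, gmMatrix_apply_of_some hu, sub_mul, Finset.sum_sub_distrib, ite_mul,
    Finset.mul_sum, Matrix.one_apply, Xset, Finset.sum_filter]

theorem mul_gmMatrix_apply_of_none (M : Matrix V V ℝ) (hv : f v = none) :
    (M * gmMatrix f) u v = M u v := by
  rw [← Matrix.transpose_apply (M * _), Matrix.transpose_mul, gmMatrix_transpose,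
    gmMatrix_mul_apply_of_none _ hv, Matrix.transpose_apply]

theorem mul_gmMatrix_apply_of_some (M : Matrix V V ℝ) (hv : f v = some j) :
    (M * gmMatrix f) u v = 2 / #(Xset f j) * ∑ z ∈ Xset f j, M u z - M u v := by
  rw [← Matrix.transpose_apply (M * _), Matrix.transpose_mul, gmMatrix_transpose,
    gmMatrix_mul_apply_of_some _ hv]
  rfl

theorem sum_gmMatrix_apply (i : Fin ℓ) :
    ∑ w ∈ Xset f i, gmMatrix f w v = if f v = some i then 1 else 0 := by
  rw [Finset.sum_congr rfl fun w hw => gmMatrix_apply_of_some (mem_Xset.mp hw),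
    Finset.sum_sub_distrib, Finset.sum_const, nsmul_eq_mul]
  simp only [Matrix.one_apply, Finset.sum_ite_eq', mem_Xset]
  split_ifs with hv
  · field_simp [card_Xset_ne_zero hv]; ring
  · ring

theorem gmMatrix_mul_self : gmMatrix f * gmMatrix f = 1 := by
  ext u v
  rcases hu : f u with _ | i
  · rw [gmMatrix_mul_apply_of_none _ hu, gmMatrix_apply_of_none hu]
  · rw [gmMatrix_mul_apply_of_some _ hu, sum_gmMatrix_apply, gmMatrix_apply_of_some hu]
    split_ifs
    · field_simp [card_Xset_ne_zero hu]; ring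
    · ring

theorem gmMatrix_conj_apply_of_some_of_none (hf : IsGMPartition G f) (hu : f u = some i)
    (hv : f v = none) :
    (gmMatrix f * adjMat G * gmMatrix f) u v = adjMat (gmSwitch G f) u v := by
  have hcard := card_Xset_ne_zero hu
  have hnbrs : ∑ w ∈ Xset f i, adjMat G w v = nbrsIn G v (Xset f i) := by
    simp_rw [adjMat_comm G _ v]
    exact sum_adjMat_eq_nbrsIn G v _
  rw [mul_gmMatrix_apply_of_none _ hv, gmMatrix_mul_apply_of_some _ hu, hnbrs]
  by_cases hflip : gmFlip G f u v
  · have h2 : (2 * nbrsIn G v (Xset f i) : ℝ) = #(Xset f i) := by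
      exact_mod_cast (gmFlip_iff hu hv).mp hflip
    rw [adjMat_gmSwitch_of_gmFlip hflip]
    field_simp
    linarith
  · have h : nbrsIn G v (Xset f i) = 0 ∨ nbrsIn G v (Xset f i) = #(Xset f i) := by
      have := hf.1 v (mem_Yset.mpr hv) i
      rw [← gmFlip_iff hu hv] at this
      tauto
    rw [adjMat_gmSwitch_of_not_gmFlip hflip, nbrsIn_eq_card_mul_adjMat h (mem_Xset.mpr hu),
      adjMat_comm G v u]
    field_simp
    ring

theorem gmMatrix_conj_apply_of_some_of_some (hf : IsGMPartition G f) (hu : f u = some i)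
    (hv : f v = some j) :
    (gmMatrix f * adjMat G * gmMatrix f) u v = adjMat (gmSwitch G f) u v := by
  have hrow : ∀ z ∈ Xset f j, (gmMatrix f * adjMat G) u z
      = 2 / #(Xset f i) * nbrsIn G v (Xset f i) - adjMat G u z := by
    intro z hz
    rw [gmMatrix_mul_apply_of_some _ hu, ← hf.2 j i z hz v (mem_Xset.mpr hv),
      ← sum_adjMat_eq_nbrsIn]
    simp_rw [adjMat_comm G z]
  have hcount : (#(Xset f i) * nbrsIn G u (Xset f j) : ℝ)
      = #(Xset f j) * nbrsIn G v (Xset f i) := by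
    exact_mod_cast card_mul_nbrsIn_eq hf (mem_Xset.mpr hu) (mem_Xset.mpr hv)
  rw [mul_gmMatrix_apply_of_some _ hv, Finset.sum_congr rfl hrow, hrow v (mem_Xset.mpr hv),
    Finset.sum_sub_distrib, sum_adjMat_eq_nbrsIn, Finset.sum_const, nsmul_eq_mul,
    adjMat_gmSwitch_of_not_gmFlip (not_gmFlip_of_isNone_eq (by simp [hu, hv]))]
  field_simp [card_Xset_ne_zero hu, card_Xset_ne_zero hv]
  linear_combination (-2) * hcount

theorem gmMatrix_conj (hf : IsGMPartition G f) :
    gmMatrix f * adjMat G * gmMatrix f = adjMat (gmSwitch G f) := by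
  ext u v
  rcases hu : f u with _ | i <;> rcases hv : f v with _ | j
  · rw [mul_gmMatrix_apply_of_none _ hv, gmMatrix_mul_apply_of_none _ hu,
      adjMat_gmSwitch_of_not_gmFlip (not_gmFlip_of_isNone_eq (by simp [hu, hv]))]
  · have hsymm :
        (gmMatrix f * adjMat G * gmMatrix f)ᵀ = gmMatrix f * adjMat G * gmMatrix f := by
      simp only [Matrix.transpose_mul, gmMatrix_transpose, adjMat_transpose, Matrix.mul_assoc]
    rw [← hsymm, Matrix.transpose_apply, gmMatrix_conj_apply_of_some_of_none hf hv hu,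
      adjMat_comm]
  · exact gmMatrix_conj_apply_of_some_of_none hf hu hv
  · exact gmMatrix_conj_apply_of_some_of_some hf hu hv

end SwitchingMatrix

end GodsilMcKay

/-- **Godsil–McKay switching preserves the spectrum.** If `{X_1, …, X_ℓ, Y}` is a
Godsil–McKay switching partition of the finite simple graph `G`, then `G` and the switched
graph `G'` are cospectral: their real adjacency matrices have equal characteristic
polynomials. -/
theorem godsilMcKay_cospectral {V : Type*} [Fintype V] [DecidableEq V]
    (G : SimpleGraph V) {ℓ : ℕ} (f : V → Option (Fin ℓ)) (hf : IsGMPartition G f) :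
    (adjMat G).charpoly = (adjMat (gmSwitch G f)).charpoly := by
  rw [← GodsilMcKay.gmMatrix_conj hf, Matrix.mul_assoc, Matrix.charpoly_mul_comm,
    Matrix.mul_assoc, GodsilMcKay.gmMatrix_mul_self, Matrix.mul_one]
end

section
/- For every n ≥ 1, the characteristic polynomial of the adjacency matrix (over ℝ) of the path graph P_n on n vertices equals the product over j = 1, …, n of (X − 2·cos(jπ/(n+1))); equivalently, the multiset of eigenvalues of the adjacency matrix of P_n is {2·cos(jπ/(n+1)) : j = 1, …, n}. -/
/-!
For `θ = jπ/(n+1)` with `1 ≤ j ≤ n`, the vector `(sin kθ)_{k=1..n}` is an eigenvector of the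
adjacency matrix of `P_n` with eigenvalue `2 cos θ`: the identity
`sin((k-1)θ) + sin((k+1)θ) = 2 cos θ sin kθ` holds in the interior, and at both ends because
`sin 0 = sin((n+1)θ) = 0`. These `n` eigenvalues are distinct since `cos` is injective on `[0, π]`,
so they exhaust the roots of the monic degree-`n` characteristic polynomial.
-/

open Finset SimpleGraph Polynomial

open Real
open scoped Matrix

theorem Polynomial.Monic.eq_prod_X_sub_C_of_isRoot {R ι : Type*} [CommRing R] [IsDomain R]
    {p : R[X]} (hp : p.Monic) {s : Finset ι} {r : ι → R} (hr : Set.InjOn r s)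
    (hdeg : p.natDegree = #s) (hroot : ∀ i ∈ s, p.IsRoot (r i)) :
    p = ∏ i ∈ s, (X - C (r i)) := by
  classical
  have hcard : #(s.image r) = p.natDegree := by rw [card_image_of_injOn hr, hdeg]
  have hroots : p.roots = (s.image r).val :=
    roots_eq_of_natDegree_le_card_of_ne_zero (by simpa using hroot) hcard.ge hp.ne_zero
  rw [← prod_multiset_X_sub_C_of_monic_of_roots_card_eq hp (by rw [hroots]; exact hcard),
    hroots, ← Finset.prod_eq_multiset_prod, prod_image hr]

theorem Matrix.isRoot_charpoly_of_mulVec_eq_smul {R n : Type*} [CommRing R] [IsDomain R]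
    [Fintype n] [DecidableEq n] {A : Matrix n n R} {v : n → R} {μ : R} (hv : v ≠ 0)
    (h : A *ᵥ v = μ • v) : A.charpoly.IsRoot μ := by
  rw [IsRoot, eval_charpoly, ← exists_mulVec_eq_zero_iff]
  exact ⟨v, hv, by simp [Matrix.sub_mulVec, h]⟩

theorem adjMat_pathGraph_mulVec {n : ℕ} (f : ℕ → ℝ) (h₀ : f 0 = 0) (hₙ : f (n + 1) = 0)
    (k : Fin n) : (adjMat (pathGraph n) *ᵥ fun i => f (i + 1)) k = f k + f (k + 2) := by
  obtain ⟨k, hk⟩ := k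
  have hsplit : ∀ l, (if k + 1 = l ∨ l + 1 = k then f (l + 1) else 0) =
      (if l + 1 = k then f k else 0) + (if k + 1 = l then f (k + 2) else 0) := by
    intro l; split_ifs <;> first | omega | (subst_vars; simp)
  have hleft : ∑ l ∈ range n, (if l + 1 = k then f k else 0) = f k := by
    rcases k with _ | m
    · simp [h₀]
    · simp [show m < n by omega]
  have hright : ∑ l ∈ range n, (if k + 1 = l then f (k + 2) else 0) = f (k + 2) := by
    rw [sum_ite_eq]
    split_ifs with h
    · rfl
    · rw [show k + 2 = n + 1 by simp at h; omega, hₙ]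
  simp only [Matrix.mulVec, dotProduct, adjMat, Matrix.of_apply, pathGraph_adj, ite_mul,
    one_mul, zero_mul]
  rw [Fin.sum_univ_eq_sum_range (fun l => if k + 1 = l ∨ l + 1 = k then f (l + 1) else 0)]
  simp only [hsplit, sum_add_distrib, hleft, hright]

theorem sin_sub_add_sin_add (x θ : ℝ) : sin (x - θ) + sin (x + θ) = 2 * cos θ * sin x := by
  rw [sin_sub, sin_add]; ring

theorem adjMat_pathGraph_mulVec_sin {n : ℕ} {θ : ℝ} (hθ : sin ((n + 1) * θ) = 0) :
    adjMat (pathGraph n) *ᵥ (fun i : Fin n => sin (((i + 1 : ℕ) : ℝ) * θ)) =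
      (2 * cos θ) • fun i : Fin n => sin (((i + 1 : ℕ) : ℝ) * θ) := by
  ext k
  rw [adjMat_pathGraph_mulVec (fun m => sin (m * θ)) (by simp) (by exact_mod_cast hθ)]
  have := sin_sub_add_sin_add ((k + 1) * θ) θ
  simp only [Pi.smul_apply, smul_eq_mul]
  push_cast
  convert this using 3 <;> ring

theorem mul_pi_div_mem_Ioo {n j : ℕ} (hj : j ∈ Icc 1 n) :
    (j : ℝ) * π / (n + 1) ∈ Set.Ioo 0 π := by
  rw [mem_Icc] at hj
  have hj₁ : (1 : ℝ) ≤ j := by exact_mod_cast hj.1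
  have hjn : (j : ℝ) ≤ n := by exact_mod_cast hj.2
  constructor
  · positivity
  · rw [div_lt_iff₀ (by positivity)]
    nlinarith [pi_pos]

theorem isRoot_charpoly_adjMat_pathGraph {n j : ℕ} (hj : j ∈ Icc 1 n) :
    (adjMat (pathGraph n)).charpoly.IsRoot (2 * cos (j * π / (n + 1))) := by
  obtain ⟨hpos, hlt⟩ := mul_pi_div_mem_Ioo hj
  have hn : 0 < n := (mem_Icc.mp hj).1.trans (mem_Icc.mp hj).2
  refine Matrix.isRoot_charpoly_of_mulVec_eq_smul (fun h => ?_) (adjMat_pathGraph_mulVec_sin ?_)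
  · exact (sin_pos_of_pos_of_lt_pi hpos hlt).ne' (by simpa using congrFun h ⟨0, hn⟩)
  · rw [mul_div_cancel₀ _ (by positivity)]
    exact sin_nat_mul_pi j

theorem injOn_two_mul_cos_mul_pi_div (n : ℕ) :
    Set.InjOn (fun j : ℕ => 2 * cos (j * π / (n + 1))) (Icc 1 n) := by
  intro j hj k hk hjk
  have h := injOn_cos (Set.Ioo_subset_Icc_self (mul_pi_div_mem_Ioo hj))
    (Set.Ioo_subset_Icc_self (mul_pi_div_mem_Ioo hk)) (by simpa using hjk)
  field_simp at h
  exact_mod_cast h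

theorem pathGraph_charpoly_general (n : ℕ) :
    (adjMat (SimpleGraph.pathGraph n)).charpoly =
      ∏ j ∈ Finset.Icc 1 n,
        (Polynomial.X - Polynomial.C (2 * Real.cos ((j : ℝ) * Real.pi / ((n : ℝ) + 1)))) :=
  (Matrix.charpoly_monic _).eq_prod_X_sub_C_of_isRoot (injOn_two_mul_cos_mul_pi_div n)
    (by simp [Matrix.charpoly_natDegree_eq_dim]) fun _ => isRoot_charpoly_adjMat_pathGraph

/-- The characteristic polynomial of the adjacency matrix of the path graph `P_n` on `n`
vertices is `∏_{j=1}^{n} (X - 2 cos(jπ/(n+1)))`. -/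
theorem pathGraph_charpoly (n : ℕ) (hn : 1 ≤ n) :
    (adjMat (SimpleGraph.pathGraph n)).charpoly =
      ∏ j ∈ Finset.Icc 1 n,
        (Polynomial.X - Polynomial.C (2 * Real.cos ((j : ℝ) * Real.pi / ((n : ℝ) + 1)))) :=
  pathGraph_charpoly_general n
end
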